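/- Under the stated block hypotheses, for all i ≠ j in {0,…,d−1} the off-diagonal blocks of B satisfy F_{ij} = −ω^{−(d−2)/m} ω^{i+j} (F_{ji})†, where † denotes the conjugate transpose. -/

import Mathlib

open Matrix Kronecker

/-- `omg d t` is ω^t = exp(2πi·t/d), where ω = exp(2πi/d). -/
noncomputable def omg (d : ℕ) (t : ℝ) : ℂ :=
  Complex.exp ((2 * Real.pi * t / d : ℝ) * Complex.I)

/-- The coefficient a_k = ω^{(2k−d)/(4m)} / (2 cos(π/(2m))). -/
noncomputable def acoef (d m k : ℕ) : ℂ :=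
  omg d ((2 * (k : ℝ) - d) / (4 * m)) / ((2 * Real.cos (Real.pi / (2 * m)) : ℝ) : ℂ)

/-- `abar d m A B k` is Ābar^{(k)} = a_k A^k + conj(a_k) B^k. -/
noncomputable def abar {n : Type*} [Fintype n] [DecidableEq n] (d m : ℕ)
    (A B : Matrix n n ℂ) (k : ℕ) : Matrix n n ℂ :=
  acoef d m k • A ^ k + (starRingEnd ℂ) (acoef d m k) • B ^ k

/-- Z_d = diag(1, ω, …, ω^{d−1}). -/
noncomputable def Zmat (d : ℕ) : Matrix (Fin d) (Fin d) ℂ :=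
  Matrix.diagonal fun i => omg d (i : ℝ)

lemma omg_add (d : ℕ) (s t : ℝ) : omg d s * omg d t = omg d (s + t) := by
  unfold omg; rw [← Complex.exp_add]; congr 1; push_cast; ring

lemma omg_ne (d : ℕ) (t : ℝ) : omg d t ≠ 0 := Complex.exp_ne_zero _

lemma omg_conj (d : ℕ) (t : ℝ) : (starRingEnd ℂ) (omg d t) = omg d (-t) := by
  unfold omg; rw [← Complex.exp_conj]; congr 1
  simp [_root_.map_mul, Complex.conj_I, map_ofNat]
  ring

lemma omg_zero (d : ℕ) : omg d 0 = 1 := by simp [omg]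

lemma omg_d_mul (d : ℕ) (hd : d ≠ 0) (n : ℕ) : omg d ((d : ℝ) * n) = 1 := by
  unfold omg
  have h : (2 * Real.pi * ((d:ℝ) * n) / d : ℝ) = n * (2 * Real.pi) := by
    field_simp
  rw [h]
  have := Complex.exp_int_mul_two_pi_mul_I (n : ℤ)
  convert this using 2
  push_cast; ring

lemma omg_pow (d : ℕ) (t : ℝ) (n : ℕ) : (omg d t) ^ n = omg d (n * t) := by
  induction n with
  | zero => simp [omg_zero]
  | succ k ih => rw [pow_succ, ih, omg_add]; congr 1; push_cast; ring

/-- For i ≠ j, F_{ij} = −ω^{−(d−2)/m} ω^{i+j} (F_{ji})†. -/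
theorem stmt8 (d m D : ℕ) (hd : 2 ≤ d) (hm : 2 ≤ m) (hD : 1 ≤ D)
    (B : Matrix (Fin d × Fin D) (Fin d × Fin D) ℂ)
    (hB : B ∈ Matrix.unitaryGroup (Fin d × Fin D) ℂ) (hBd : B ^ d = 1)
    (F : Fin d → Fin d → Matrix (Fin D) (Fin D) ℂ)
    (hF : ∀ (i j : Fin d) (p q : Fin D), B (i, p) (j, q) = F i j p q)
    (hrel1 : ∀ k, 1 ≤ k → k ≤ d - 1 →
      abar d m (Zmat d ⊗ₖ (1 : Matrix (Fin D) (Fin D) ℂ)) B k *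
        abar d m (Zmat d ⊗ₖ (1 : Matrix (Fin D) (Fin D) ℂ)) B (d - k) = 1)
    (hrel2 : ∀ k, 1 ≤ k → k ≤ d - 1 →
      abar d m (Zmat d ⊗ₖ (1 : Matrix (Fin D) (Fin D) ℂ)) B k =
        (abar d m (Zmat d ⊗ₖ (1 : Matrix (Fin D) (Fin D) ℂ)) B 1) ^ k) :
    ∀ i j : Fin d, i ≠ j →
      F i j = (-(omg d (-(((d : ℝ) - 2) / m)) * omg d ((i : ℝ) + (j : ℝ)))) • (F j i)ᴴ := by
  intro i j hij
  have hdne : (d : ℕ) ≠ 0 := by omega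
  set w : Fin d × Fin D → ℂ := fun x => omg d ((x.1 : ℕ) : ℝ) with hw
  set M : Matrix (Fin d × Fin D) (Fin d × Fin D) ℂ := Matrix.diagonal w with hM
  -- Kronecker product is a diagonal matrix
  have hAK : (Zmat d ⊗ₖ (1 : Matrix (Fin D) (Fin D) ℂ)) = M := by
    rw [hM]
    ext ⟨x, p⟩ ⟨y, q⟩
    simp [Zmat, Matrix.diagonal_apply, Matrix.one_apply, Prod.ext_iff, hw]
    by_cases hxy : x = y <;> by_cases hpq : p = q <;> simp [hxy, hpq]
  -- facts about M
  have hMd : M ^ d = 1 := by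
    rw [hM, Matrix.diagonal_pow]
    have : w ^ d = 1 := by
      funext x
      simp only [Pi.pow_apply, Pi.one_apply, hw, omg_pow]
      exact omg_d_mul d hdne x.1
    rw [this]; exact Matrix.diagonal_one
  have hMMH : M * Mᴴ = 1 := by
    rw [hM, Matrix.diagonal_conjTranspose, Matrix.diagonal_mul_diagonal]
    have : (fun i => w i * star w i) = fun _ => (1:ℂ) := by
      funext x
      simp only [Pi.star_apply, hw, Complex.star_def, omg_conj]
      rw [omg_add]; simp [omg_zero]
    rw [this]; exact Matrix.diagonal_one
  have hMHM : Mᴴ * M = 1 := by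
    rw [hM, Matrix.diagonal_conjTranspose, Matrix.diagonal_mul_diagonal]
    have : (fun i => star w i * w i) = fun _ => (1:ℂ) := by
      funext x
      simp only [Pi.star_apply, hw, Complex.star_def, omg_conj]
      rw [omg_add]; simp [omg_zero]
    rw [this]; exact Matrix.diagonal_one
  have hMpow : Mᴴ = M ^ (d-1) := by
    have h3 : M * M ^ (d-1) = 1 := by
      rw [← pow_succ']
      have : d - 1 + 1 = d := by omega
      rw [this, hMd]
    calc Mᴴ = Mᴴ * (M * M ^ (d-1)) := by rw [h3, mul_one]
      _ = (Mᴴ * M) * M ^ (d-1) := by rw [mul_assoc]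
      _ = M ^ (d-1) := by rw [hMHM, one_mul]
  -- facts about B
  have hBBH : B * Bᴴ = 1 := by
    have := Matrix.mem_unitaryGroup_iff.mp hB
    simpa [Matrix.star_eq_conjTranspose] using this
  have hBHB : Bᴴ * B = 1 := by
    have := Matrix.mem_unitaryGroup_iff'.mp hB
    simpa [Matrix.star_eq_conjTranspose] using this
  have hBpow : Bᴴ = B ^ (d-1) := by
    have h3 : B * B ^ (d-1) = 1 := by
      rw [← pow_succ']
      have : d - 1 + 1 = d := by omega
      rw [this, hBd]
    calc Bᴴ = Bᴴ * (B * B ^ (d-1)) := by rw [h3, mul_one]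
      _ = (Bᴴ * B) * B ^ (d-1) := by rw [mul_assoc]
      _ = B ^ (d-1) := by rw [hBHB, one_mul]
  -- scalar facts
  have hcpos : (0:ℝ) < 2 * Real.cos (Real.pi / (2 * m)) := by
    have h1 : (0:ℝ) < Real.pi := Real.pi_pos
    have h2 : Real.pi / (2 * m) < Real.pi / 2 := by
      apply div_lt_div_of_pos_left h1 (by norm_num)
      have : (2:ℝ) ≤ (m:ℝ) := by exact_mod_cast hm
      linarith
    have h3 : 0 < Real.pi / (2 * m) := by positivity
    have := Real.cos_pos_of_mem_Ioo ⟨by linarith, h2⟩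
    linarith
  have hcne : (((2 * Real.cos (Real.pi / (2 * m)) : ℝ)) : ℂ) ≠ 0 := by
    exact_mod_cast Complex.ofReal_ne_zero.mpr (ne_of_gt hcpos)
  have hane : acoef d m 1 ≠ 0 := div_ne_zero (omg_ne _ _) hcne
  have hbne : (starRingEnd ℂ) (acoef d m 1) ≠ 0 := by
    simpa using hane
  have hcconj : acoef d m (d-1) = (starRingEnd ℂ) (acoef d m 1) := by
    unfold acoef
    rw [map_div₀, omg_conj, Complex.conj_ofReal]
    congr 2
    push_cast [Nat.cast_sub (by omega : 1 ≤ d)]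
    ring
  have hb : (starRingEnd ℂ) (acoef d m 1)
      = omg d (((d:ℝ) - 2)/(4*m)) / (((2 * Real.cos (Real.pi / (2 * m)) : ℝ)) : ℂ) := by
    unfold acoef
    rw [map_div₀, omg_conj, Complex.conj_ofReal]
    congr 1
    push_cast
    ring_nf
  have ha' : acoef d m 1
      = omg d ((2 - (d:ℝ))/(4*m)) / (((2 * Real.cos (Real.pi / (2 * m)) : ℝ)) : ℂ) := by
    unfold acoef
    congr 2
    push_cast
    ring
  -- the main relation
  have hrel := hrel1 1 le_rfl (by omega)
  rw [hAK] at hrel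
  unfold abar at hrel
  rw [hcconj, Complex.conj_conj, pow_one, pow_one, ← hMpow, ← hBpow] at hrel
  set a : ℂ := acoef d m 1 with ha
  set b : ℂ := (starRingEnd ℂ) (acoef d m 1) with hbdef
  have hexp : (a • M + b • B) * (b • Mᴴ + a • Bᴴ)
      = (a*b) • (M * Mᴴ) + (a*a) • (M * Bᴴ) + ((b*b) • (B * Mᴴ) + (b*a) • (B * Bᴴ)) := by
    simp only [add_mul, mul_add, smul_mul_assoc, mul_smul_comm, smul_smul]
    module
  rw [hexp, hMMH, hBBH] at hrel
  -- entry extraction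
  ext p q
  have hne : ((i,p) : Fin d × Fin D) ≠ (j,q) := fun h => hij (congrArg Prod.fst h)
  have hent := Matrix.ext_iff.mpr hrel (i,p) (j,q)
  simp only [Matrix.add_apply, Matrix.smul_apply, Matrix.one_apply_ne hne, smul_eq_mul,
    mul_zero, zero_add, add_zero] at hent
  rw [hM, Matrix.diagonal_mul, Matrix.diagonal_conjTranspose, Matrix.mul_diagonal,
    Matrix.conjTranspose_apply, hF j i q p, hF i j p q] at hent
  have hwi : w (i,p) = omg d ((i : ℕ) : ℝ) := rfl
  have hwj : star w (j,q) = omg d (-((j : ℕ) : ℝ)) := by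
    simp only [Pi.star_apply, hw, Complex.star_def, omg_conj]
  rw [hwi, hwj, Complex.star_def] at hent
  -- scalar identity
  have hS : a * a * omg d ((i:ℕ):ℝ)
      = (omg d (-(((d:ℝ) - 2) / m)) * omg d ((i : ℝ) + (j : ℝ)))
        * ((b*b) * omg d (-((j:ℕ):ℝ))) := by
    rw [ha', hb]
    rw [div_mul_div_comm, div_mul_eq_mul_div, div_mul_div_comm]
    rw [mul_comm ((omg d (-(((d:ℝ) - 2) / m)) * omg d ((i : ℝ) + (j : ℝ)))) _,
      div_mul_eq_mul_div, div_mul_eq_mul_div]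
    congr 1
    simp only [omg_add]
    congr 1
    have hmne : (m:ℝ) ≠ 0 := Nat.cast_ne_zero.mpr (by omega)
    field_simp
    ring
  -- finish
  simp only [Matrix.smul_apply, Matrix.conjTranspose_apply, smul_eq_mul, Complex.star_def]
  have hne2 : (b * b) * omg d (-((j:ℕ):ℝ)) ≠ 0 :=
    mul_ne_zero (mul_ne_zero hbne hbne) (omg_ne _ _)
  apply mul_left_cancel₀ hne2
  linear_combination hent - (starRingEnd ℂ) (F j i q p) * hS
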